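/- arXiv:2403.06751 — 3 statements merged into one kernel-verified Lean document; each statement's English description precedes it below -/
import Mathlib

section
/- If S is a sparse collection of dyadic subintervals of [0,1), then for every λ ∈ ℝ, |{x ∈ [0,1) : A_S(1_{[0,1)})(x) ≥ λ}| ≤ 2^{2−λ}. -/
open MeasureTheory

/-- The dyadic interval `[k/2^n, (k+1)/2^n)`. -/
def dyadicI (n k : ℕ) : Set ℝ := Set.Ico ((k : ℝ) / 2 ^ n) ((k + 1 : ℝ) / 2 ^ n)

/-- The summand of the sparse operator `A_α f` at the point `x`. -/
noncomputable def Aterm (α : ℕ × ℕ → ℝ) (f : ℝ → ℝ) (x : ℝ) (p : ℕ × ℕ) : ℝ :=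
  Set.indicator {q : ℕ × ℕ | q.2 < 2 ^ q.1}
    (fun q => α q * ((2 : ℝ) ^ q.1 * ∫ t in dyadicI q.1 q.2, |f t|)
      * Set.indicator (dyadicI q.1 q.2) (fun _ => (1 : ℝ)) x) p

/-- The sparse operator `A_α f(x) = Σ_J α_J ⟨|f|⟩_J 1_J(x)`. -/
noncomputable def Aop (α : ℕ × ℕ → ℝ) (f : ℝ → ℝ) (x : ℝ) : ℝ := ∑' p, Aterm α f x p

open scoped ENNReal

/-!
Here `A_S 1_{[0,1)}(x)` is the number of intervals of `S` containing `x`, and these intervals form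
a chain. Call the depth of `J ∈ S` the number of intervals of `S` containing `J`; then the level set
`{A_S 1 ≥ m}` is covered by the intervals of depth exactly `m`. Let `U_j` be the total length of the
intervals of depth `≥ j`. The set `E(J)` of an interval of depth `> j` lies in `I \ E(I)` for its
ancestor `I` of depth `j`, and `|I \ E(I)| ≤ |I|/2`; so `U_{j+1} ≤ U_j - U_{j+1}`. Together with
`U_1 ≤ 2 |⋃ E(J)| ≤ 2` this gives `U_{j+1} ≤ 2^{1-j}`, and with `m = ⌈λ⌉` the level set has measure
at most `2^{2-m} ≤ 2^{2-λ}`.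
-/

section Sparse

variable {ι α : Type*} [MeasurableSpace α] {μ : Measure α}

theorem tsum_measure_le_mul_measure_biUnion {I E : ι → Set α} {B : Set ι} {c : ℝ≥0∞}
    (hB : B.Countable) (hE : ∀ p ∈ B, MeasurableSet (E p)) (hdisj : B.PairwiseDisjoint E)
    (hsize : ∀ p ∈ B, μ (I p) ≤ c * μ (E p)) :
    ∑' p : B, μ (I p) ≤ c * μ (⋃ p ∈ B, E p) := by
  rw [measure_biUnion hB hdisj hE, ← ENNReal.tsum_mul_left]
  exact ENNReal.tsum_le_tsum fun p => hsize p p.2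

theorem two_mul_measure_sdiff_le {I E : Set α} (hEI : E ⊆ I) (hE : NullMeasurableSet E μ)
    (hI : μ I ≠ ∞) (hsize : μ I ≤ 2 * μ E) : 2 * μ (I \ E) ≤ μ I := by
  have hsplit : μ E + μ (I \ E) = μ I := by
    rw [measure_add_sdiff hE, Set.union_eq_self_of_subset_left hEI]
  have hEfin : μ E ≠ ∞ := ne_top_of_le_ne_top hI (measure_mono hEI)
  have hdiff : μ (I \ E) ≤ μ E := by
    rw [← ENNReal.add_le_add_iff_left hEfin, hsplit, ← two_mul]
    exact hsize
  calc 2 * μ (I \ E) = μ (I \ E) + μ (I \ E) := two_mul _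
    _ ≤ μ E + μ (I \ E) := by gcongr
    _ = μ I := hsplit

end Sparse

theorem mem_dyadicI_iff {n k : ℕ} {x : ℝ} :
    x ∈ dyadicI n k ↔ 0 ≤ x ∧ ⌊2 ^ n * x⌋₊ = k := by
  have h2n : (0 : ℝ) < 2 ^ n := by positivity
  constructor
  · rintro ⟨h1, h2⟩
    have hx : 0 ≤ x := le_trans (by positivity) h1
    refine ⟨hx, (Nat.floor_eq_iff (by positivity)).2 ⟨?_, ?_⟩⟩
    · rw [div_le_iff₀ h2n] at h1; linarith
    · rw [lt_div_iff₀ h2n] at h2; linarith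
  · rintro ⟨hx, h⟩
    obtain ⟨h1, h2⟩ := (Nat.floor_eq_iff (by positivity)).1 h
    refine ⟨?_, ?_⟩
    · rw [div_le_iff₀ h2n]; linarith
    · rw [lt_div_iff₀ h2n]; linarith

theorem eq_of_mem_dyadicI {n k k' : ℕ} {x : ℝ} (h : x ∈ dyadicI n k) (h' : x ∈ dyadicI n k') :
    k = k' :=
  (mem_dyadicI_iff.1 h).2.symm.trans (mem_dyadicI_iff.1 h').2

theorem dyadicI_subset_of_mem_of_le {n k n' k' : ℕ} {x : ℝ} (hn : n' ≤ n)
    (hx : x ∈ dyadicI n k) (hx' : x ∈ dyadicI n' k') : dyadicI n k ⊆ dyadicI n' k' := by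
  have floor_eq : ∀ y ∈ dyadicI n k, ⌊2 ^ n' * y⌋₊ = k / 2 ^ (n - n') := by
    intro y hy
    obtain ⟨hy0, hyk⟩ := mem_dyadicI_iff.1 hy
    rw [← hyk, ← Nat.floor_div_natCast]
    congr 1
    rw [Nat.cast_pow, Nat.cast_ofNat, eq_div_iff (by positivity), mul_assoc, mul_comm y,
      ← mul_assoc, ← pow_add, Nat.add_sub_cancel' hn]
  intro y hy
  refine mem_dyadicI_iff.2 ⟨(mem_dyadicI_iff.1 hy).1, ?_⟩
  rw [floor_eq y hy, ← floor_eq x hx, (mem_dyadicI_iff.1 hx').2]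

theorem dyadicI_subset_or_subset_of_mem {n k n' k' : ℕ} {x : ℝ}
    (hx : x ∈ dyadicI n k) (hx' : x ∈ dyadicI n' k') :
    dyadicI n k ⊆ dyadicI n' k' ∨ dyadicI n' k' ⊆ dyadicI n k :=
  (le_total n' n).imp (dyadicI_subset_of_mem_of_le · hx hx') (dyadicI_subset_of_mem_of_le · hx' hx)

theorem volume_dyadicI (n k : ℕ) : volume (dyadicI n k) = ENNReal.ofReal (2 ^ n)⁻¹ := by
  rw [dyadicI, Real.volume_Ico, ← sub_div, add_sub_cancel_left, one_div]

theorem dyadicI_nonempty (n k : ℕ) : (dyadicI n k).Nonempty :=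
  ⟨k / 2 ^ n, mem_dyadicI_iff.2 ⟨by positivity, by simp [mul_div_cancel₀]⟩⟩

theorem le_of_dyadicI_subset {n k n' k' : ℕ} (h : dyadicI n k ⊆ dyadicI n' k') : n' ≤ n := by
  have := measure_mono (μ := volume) h
  rw [volume_dyadicI, volume_dyadicI, ENNReal.ofReal_le_ofReal_iff (by positivity),
    inv_le_inv₀ (by positivity) (by positivity)] at this
  exact (pow_le_pow_iff_right₀ one_lt_two).1 this

theorem eq_of_dyadicI_eq {n k n' k' : ℕ} (h : dyadicI n k = dyadicI n' k') :
    n = n' ∧ k = k' := by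
  obtain rfl : n = n' := le_antisymm (le_of_dyadicI_subset h.ge) (le_of_dyadicI_subset h.le)
  obtain ⟨x, hx⟩ := dyadicI_nonempty n k
  exact ⟨rfl, eq_of_mem_dyadicI hx (h ▸ hx)⟩

theorem dyadicI_subset_Ico {n k : ℕ} (h : k < 2 ^ n) : dyadicI n k ⊆ Set.Ico 0 1 := by
  refine Set.Ico_subset_Ico (by positivity) ((div_le_one (by positivity)).2 ?_)
  exact_mod_cast h

noncomputable def totalLength (B : Set (ℕ × ℕ)) : ℝ≥0∞ :=
  ∑' p : B, volume (dyadicI (p : ℕ × ℕ).1 (p : ℕ × ℕ).2)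

theorem totalLength_mono {B C : Set (ℕ × ℕ)} (h : B ⊆ C) : totalLength B ≤ totalLength C :=
  ENNReal.tsum_mono_subtype (fun p : ℕ × ℕ => volume (dyadicI p.1 p.2)) h

theorem two_div_two_pow_le_ofReal_rpow {lam : ℝ} {j : ℕ} (h : lam ≤ j + 1) :
    2 / 2 ^ j ≤ ENNReal.ofReal ((2 : ℝ) ^ ((2 : ℝ) - lam)) := by
  calc (2 : ℝ≥0∞) / 2 ^ j = ENNReal.ofReal ((2 : ℝ) ^ ((1 : ℝ) - j)) := by
        rw [Real.rpow_sub two_pos, Real.rpow_one, Real.rpow_natCast,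
          ENNReal.ofReal_div_of_pos (by positivity), ENNReal.ofReal_pow zero_le_two,
          ENNReal.ofReal_ofNat]
    _ ≤ ENNReal.ofReal ((2 : ℝ) ^ ((2 : ℝ) - lam)) :=
        ENNReal.ofReal_le_ofReal (Real.rpow_le_rpow_of_exponent_le one_le_two (by linarith))

section Depth

variable (S : Set (ℕ × ℕ))

def ancestors (p : ℕ × ℕ) : Set (ℕ × ℕ) := {q ∈ S | dyadicI p.1 p.2 ⊆ dyadicI q.1 q.2}

noncomputable def depth (p : ℕ × ℕ) : ℕ := (ancestors S p).ncard

variable {S}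

theorem self_mem_ancestors {p : ℕ × ℕ} (hp : p ∈ S) : p ∈ ancestors S p := ⟨hp, subset_rfl⟩

theorem ancestors_subset_ancestors {p q : ℕ × ℕ} (h : dyadicI p.1 p.2 ⊆ dyadicI q.1 q.2) :
    ancestors S q ⊆ ancestors S p :=
  fun _ hr => ⟨hr.1, h.trans hr.2⟩

theorem ancestors_finite (hS : ∀ p ∈ S, p.2 < 2 ^ p.1) (p : ℕ × ℕ) :
    (ancestors S p).Finite := by
  refine (Set.finite_Iic (p.1, 2 ^ p.1)).subset fun q ⟨hq, hsub⟩ => ?_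
  have hlevel : q.1 ≤ p.1 := le_of_dyadicI_subset hsub
  exact ⟨hlevel, ((hS q hq).trans_le (Nat.pow_le_pow_right two_pos hlevel)).le⟩

theorem depth_le_of_subset (hS : ∀ p ∈ S, p.2 < 2 ^ p.1) {p q : ℕ × ℕ}
    (h : dyadicI p.1 p.2 ⊆ dyadicI q.1 q.2) : depth S q ≤ depth S p :=
  Set.ncard_le_ncard (ancestors_subset_ancestors h) (ancestors_finite hS p)

theorem eq_of_subset_of_depth_eq (hS : ∀ p ∈ S, p.2 < 2 ^ p.1) {q r : ℕ × ℕ} (hq : q ∈ S)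
    (hsub : dyadicI q.1 q.2 ⊆ dyadicI r.1 r.2) (hdepth : depth S q = depth S r) : q = r := by
  have hanc : ancestors S r = ancestors S q :=
    Set.eq_of_subset_of_ncard_le (ancestors_subset_ancestors hsub) hdepth.le
      (ancestors_finite hS q)
  have hrq : dyadicI r.1 r.2 ⊆ dyadicI q.1 q.2 := (hanc ▸ self_mem_ancestors hq).2
  obtain ⟨h1, h2⟩ := eq_of_dyadicI_eq (hsub.antisymm hrq)
  exact Prod.ext h1 h2

/-- Depth is injective on the chain of ancestors of `p`, which has `depth S p` elements. -/
theorem exists_mem_ancestors_depth_eq (hS : ∀ p ∈ S, p.2 < 2 ^ p.1) {p : ℕ × ℕ} {m : ℕ}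
    (hm : m ∈ Set.Icc 1 (depth S p)) : ∃ q ∈ ancestors S p, depth S q = m := by
  have hmaps : ∀ q ∈ ancestors S p, depth S q ∈ Set.Icc 1 (depth S p) := fun q hq =>
    ⟨(Set.ncard_pos (ancestors_finite hS q)).2 ⟨q, self_mem_ancestors hq.1⟩,
      depth_le_of_subset hS hq.2⟩
  have hinj : ∀ q r, q ∈ ancestors S p → r ∈ ancestors S p → depth S q = depth S r → q = r := by
    intro q r hq hr hqr
    obtain ⟨x, hx⟩ := dyadicI_nonempty p.1 p.2
    rcases dyadicI_subset_or_subset_of_mem (hq.2 hx) (hr.2 hx) with h | h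
    · exact eq_of_subset_of_depth_eq hS hq.1 h hqr
    · exact (eq_of_subset_of_depth_eq hS hr.1 h hqr.symm).symm
  obtain ⟨q, hq, rfl⟩ := Set.surj_on_of_inj_on_of_ncard_le (fun q _ => depth S q) hmaps hinj
    (by simp [depth]) (Set.finite_Icc _ _) m hm
  exact ⟨q, hq, rfl⟩

theorem setIntegral_dyadicI_abs_indicator_Ico {n k : ℕ} (h : k < 2 ^ n) :
    ∫ t in dyadicI n k, |Set.indicator (Set.Ico (0 : ℝ) 1) (fun _ => (1 : ℝ)) t| = (2 ^ n)⁻¹ := by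
  rw [setIntegral_congr_fun (s := dyadicI n k) measurableSet_Ico (g := fun _ => (1 : ℝ))
    (fun t ht => by simp [Set.indicator_of_mem (dyadicI_subset_Ico h ht)]),
    setIntegral_const, smul_eq_mul, mul_one, measureReal_def, volume_dyadicI,
    ENNReal.toReal_ofReal (by positivity)]

theorem Aterm_indicator_eq (hS : ∀ p ∈ S, p.2 < 2 ^ p.1) (x : ℝ) (p : ℕ × ℕ) :
    Aterm (Set.indicator S fun _ => 1) (Set.indicator (Set.Ico (0 : ℝ) 1) fun _ => 1) x p
      = Set.indicator {q ∈ S | x ∈ dyadicI q.1 q.2} (fun _ => 1) p := by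
  by_cases hp : p ∈ S
  · rw [Aterm, Set.indicator_of_mem (show p ∈ {q : ℕ × ℕ | q.2 < 2 ^ q.1} from hS p hp),
      Set.indicator_of_mem hp, setIntegral_dyadicI_abs_indicator_Ico (hS p hp)]
    by_cases hx : x ∈ dyadicI p.1 p.2 <;> simp [hp, hx]
  · simp [Aterm, Set.indicator_apply, hp]

/-- When infinitely many intervals of `S` contain `x`, both sides are junk zeros. -/
theorem Aop_indicator_eq_ncard (hS : ∀ p ∈ S, p.2 < 2 ^ p.1) (x : ℝ) :
    Aop (Set.indicator S fun _ => 1) (Set.indicator (Set.Ico (0 : ℝ) 1) fun _ => 1) x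
      = {p ∈ S | x ∈ dyadicI p.1 p.2}.ncard := by
  rw [Aop, tsum_congr (Aterm_indicator_eq hS x), ← tsum_subtype, tsum_const,
    Nat.card_coe_set_eq, nsmul_one]

/-- The intervals of `S` containing `x` form a chain, contained in the ancestors of its smallest
member. -/
theorem mem_biUnion_depth_eq_of_le_ncard (hS : ∀ p ∈ S, p.2 < 2 ^ p.1) {x : ℝ} {m : ℕ}
    (hm : 1 ≤ m) (hx : m ≤ {p ∈ S | x ∈ dyadicI p.1 p.2}.ncard) :
    x ∈ ⋃ q ∈ {q ∈ S | depth S q = m}, dyadicI q.1 q.2 := by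
  set T := {p ∈ S | x ∈ dyadicI p.1 p.2}
  have hT : T.Finite := Set.finite_of_ncard_pos (by omega)
  obtain ⟨p, hpT, hpmax⟩ := Set.exists_max_image T Prod.fst hT
    (Set.nonempty_of_ncard_ne_zero (by omega))
  have hTp : T ⊆ ancestors S p := fun q hq =>
    ⟨hq.1, dyadicI_subset_of_mem_of_le (hpmax q hq) hpT.2 hq.2⟩
  obtain ⟨q, hq, hqm⟩ := exists_mem_ancestors_depth_eq hS
    ⟨hm, hx.trans (Set.ncard_le_ncard hTp (ancestors_finite hS p))⟩
  exact Set.mem_biUnion ⟨hq.1, hqm⟩ (hq.2 hpT.2)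

theorem totalLength_depth_ge_eq (j : ℕ) :
    totalLength {p ∈ S | j ≤ depth S p}
      = totalLength {p ∈ S | depth S p = j} + totalLength {p ∈ S | j + 1 ≤ depth S p} := by
  have hsplit : {p ∈ S | j ≤ depth S p}
      = {p ∈ S | depth S p = j} ∪ {p ∈ S | j + 1 ≤ depth S p} := by
    ext p; by_cases hp : p ∈ S <;> simp [hp]; omega
  have hdisj : Disjoint {p ∈ S | depth S p = j} {p ∈ S | j + 1 ≤ depth S p} :=
    Set.disjoint_left.2 fun p hp hp' => by have := hp.2; have := hp'.2; omega
  rw [totalLength, hsplit, ENNReal.summable.tsum_union_disjoint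
    (f := fun p : ℕ × ℕ => volume (dyadicI p.1 p.2)) hdisj ENNReal.summable]
  rfl

theorem totalLength_le_two (hS : ∀ p ∈ S, p.2 < 2 ^ p.1) {E : ℕ × ℕ → Set ℝ}
    (hEsub : ∀ p ∈ S, E p ⊆ dyadicI p.1 p.2) (hEmeas : ∀ p ∈ S, MeasurableSet (E p))
    (hEsize : ∀ p ∈ S, volume (dyadicI p.1 p.2) ≤ 2 * volume (E p))
    (hdisj : S.PairwiseDisjoint E) {B : Set (ℕ × ℕ)} (hB : B ⊆ S) :
    totalLength B ≤ 2 := by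
  calc totalLength B ≤ 2 * volume (⋃ p ∈ B, E p) :=
        tsum_measure_le_mul_measure_biUnion B.to_countable (fun p hp => hEmeas p (hB hp))
          (hdisj.subset hB) (fun p hp => hEsize p (hB hp))
    _ ≤ 2 * volume (Set.Ico (0 : ℝ) 1) := by
        gcongr
        exact Set.iUnion₂_subset fun p hp =>
          (hEsub p (hB hp)).trans (dyadicI_subset_Ico (hS p (hB hp)))
    _ = 2 := by simp

/-- Each `E p` with `depth S p > j` lies in `J q \ E q` for the ancestor `q` of `p` of depth `j`. -/
theorem totalLength_depth_ge_succ_le (hS : ∀ p ∈ S, p.2 < 2 ^ p.1) {E : ℕ × ℕ → Set ℝ}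
    (hEsub : ∀ p ∈ S, E p ⊆ dyadicI p.1 p.2) (hEmeas : ∀ p ∈ S, MeasurableSet (E p))
    (hEsize : ∀ p ∈ S, volume (dyadicI p.1 p.2) ≤ 2 * volume (E p))
    (hdisj : S.PairwiseDisjoint E) {j : ℕ} (hj : 1 ≤ j) :
    totalLength {p ∈ S | j + 1 ≤ depth S p} ≤ totalLength {p ∈ S | depth S p = j} := by
  set D := {p ∈ S | depth S p = j}
  have hcover : ⋃ p ∈ {p ∈ S | j + 1 ≤ depth S p}, E p ⊆ ⋃ q ∈ D, dyadicI q.1 q.2 \ E q := by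
    refine Set.iUnion₂_subset fun p hp => ?_
    obtain ⟨q, hq, hqj⟩ := exists_mem_ancestors_depth_eq hS (p := p) ⟨hj, by have := hp.2; omega⟩
    have hpq : p ≠ q := by rintro rfl; have := hp.2; omega
    intro y hy
    refine Set.mem_biUnion (x := q) ⟨hq.1, hqj⟩ ⟨hq.2 (hEsub p hp.1 hy), fun hy' => ?_⟩
    exact Set.disjoint_left.1 (hdisj hp.1 hq.1 hpq) hy hy'
  calc totalLength {p ∈ S | j + 1 ≤ depth S p}
      ≤ 2 * volume (⋃ p ∈ {p ∈ S | j + 1 ≤ depth S p}, E p) :=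
        tsum_measure_le_mul_measure_biUnion (Set.to_countable _) (fun p hp => hEmeas p hp.1)
          (hdisj.subset fun _ hp => hp.1) (fun p hp => hEsize p hp.1)
    _ ≤ 2 * ∑' q : D, volume (dyadicI q.1.1 q.1.2 \ E q) := by
        gcongr
        exact (measure_mono hcover).trans (measure_biUnion_le _ D.to_countable _)
    _ = ∑' q : D, 2 * volume (dyadicI q.1.1 q.1.2 \ E q) := ENNReal.tsum_mul_left.symm
    _ ≤ totalLength D := ENNReal.tsum_le_tsum fun q =>
        two_mul_measure_sdiff_le (hEsub q q.2.1) (hEmeas q q.2.1).nullMeasurableSet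
          (by simp [volume_dyadicI]) (hEsize q q.2.1)

theorem totalLength_depth_ge_mul_pow_le (hS : ∀ p ∈ S, p.2 < 2 ^ p.1) {E : ℕ × ℕ → Set ℝ}
    (hEsub : ∀ p ∈ S, E p ⊆ dyadicI p.1 p.2) (hEmeas : ∀ p ∈ S, MeasurableSet (E p))
    (hEsize : ∀ p ∈ S, volume (dyadicI p.1 p.2) ≤ 2 * volume (E p))
    (hdisj : S.PairwiseDisjoint E) (j : ℕ) :
    totalLength {p ∈ S | j + 1 ≤ depth S p} * 2 ^ j ≤ 2 := by
  induction j with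
  | zero => simpa using totalLength_le_two hS hEsub hEmeas hEsize hdisj fun _ hp => hp.1
  | succ j ih =>
    have hhalf : 2 * totalLength {p ∈ S | j + 1 + 1 ≤ depth S p}
        ≤ totalLength {p ∈ S | j + 1 ≤ depth S p} := by
      rw [totalLength_depth_ge_eq (j + 1), two_mul]
      gcongr
      exact totalLength_depth_ge_succ_le hS hEsub hEmeas hEsize hdisj (Nat.le_add_left 1 j)
    calc totalLength {p ∈ S | j + 1 + 1 ≤ depth S p} * 2 ^ (j + 1)
        = 2 * totalLength {p ∈ S | j + 1 + 1 ≤ depth S p} * 2 ^ j := by ring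
      _ ≤ totalLength {p ∈ S | j + 1 ≤ depth S p} * 2 ^ j := by gcongr
      _ ≤ 2 := ih

end Depth

/-- If `S` is a sparse collection of dyadic subintervals of `[0,1)`, then for every `λ`,
`|{x ∈ [0,1) : A_S(1_{[0,1)})(x) ≥ λ}| ≤ 2^{2-λ}`. -/
theorem stmt2 (S : Set (ℕ × ℕ)) (hS : ∀ p ∈ S, p.2 < 2 ^ p.1)
    (E : ℕ × ℕ → Set ℝ)
    (hEsub : ∀ p ∈ S, E p ⊆ dyadicI p.1 p.2)
    (hEmeas : ∀ p ∈ S, MeasurableSet (E p))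
    (hEsize : ∀ p ∈ S, volume (dyadicI p.1 p.2) ≤ 2 * volume (E p))
    (hdisj : S.PairwiseDisjoint E)
    (lam : ℝ) :
    volume {x ∈ Set.Ico (0 : ℝ) 1 |
        lam ≤ Aop (Set.indicator S fun _ => 1)
                (Set.indicator (Set.Ico (0 : ℝ) 1) fun _ => 1) x}
      ≤ ENNReal.ofReal ((2 : ℝ) ^ ((2 : ℝ) - lam)) := by
  rcases le_or_gt lam 0 with hlam | hlam
  · calc _ ≤ volume (Set.Ico (0 : ℝ) 1) := measure_mono (Set.sep_subset _ _)
      _ = ENNReal.ofReal 1 := by simp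
      _ ≤ _ := ENNReal.ofReal_le_ofReal (Real.one_le_rpow one_le_two (by linarith))
  obtain ⟨j, hj⟩ := Nat.exists_eq_add_one_of_ne_zero (Nat.ceil_pos.2 hlam).ne'
  have hcover : {x ∈ Set.Ico (0 : ℝ) 1 | lam ≤ Aop (Set.indicator S fun _ => 1)
      (Set.indicator (Set.Ico (0 : ℝ) 1) fun _ => 1) x}
      ⊆ ⋃ q ∈ {q ∈ S | depth S q = j + 1}, dyadicI q.1 q.2 := by
    rintro x ⟨-, hx⟩
    rw [Aop_indicator_eq_ncard hS] at hx
    exact mem_biUnion_depth_eq_of_le_ncard hS (Nat.le_add_left 1 j) (hj ▸ Nat.ceil_le.2 hx)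
  calc _ ≤ volume (⋃ q ∈ {q ∈ S | depth S q = j + 1}, dyadicI q.1 q.2) := measure_mono hcover
    _ ≤ totalLength {q ∈ S | depth S q = j + 1} := measure_biUnion_le _ (Set.to_countable _) _
    _ ≤ totalLength {q ∈ S | j + 1 ≤ depth S q} :=
        totalLength_mono fun _ hq => ⟨hq.1, hq.2.ge⟩
    _ ≤ 2 / 2 ^ j := (ENNReal.le_div_iff_mul_le (by simp) (by simp)).2
        (totalLength_depth_ge_mul_pow_le hS hEsub hEmeas hEsize hdisj j)
    _ ≤ _ := two_div_two_pow_le_ofReal_rpow (by exact_mod_cast hj ▸ Nat.le_ceil lam)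
end

section
/- For integers m ≥ 1 and k ≥ 0, and λ with m−k+3−2^{1−k} < λ ≤ m−k+4−2^{−k} (where the slopes a_m(λ), b_m(λ), c_m(λ) are as defined for the range k < λ ≤ k+1 with k ≥ 3): if λ_{m−k+2}^m < λ ≤ λ_{m−k+3}^{m+1} then b_m(λ) ≤ a_{m+1}(λ), where 1/a_{m+1}(λ) = 2^{m+2}(λ−(k−1))(1/(2^{m−k+4}−1) − 1/(2^{m−k+5}−1)) and 1/b_m(λ) = 2^{m+1}((λ−k)/(2^{m−k+2}−1) − (λ−(k−1))/(2^{m−k+4}−1)), and λ_j^n = n−j+3−2^{−j}. Equivalently: (λ−k)/(λ−(k−1)) ≥ (2^{m−k+2}−1)(2^{m−k+6}−1)/((2^{m−k+4}−1)(2^{m−k+5}−1)) holds whenever (λ−k)/(λ−(k−1)) > (2^{m−k+2}−1)/(2^{m−k+3}−1). -/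
/-!
Write `x = 2 ^ (m - k + 2)` and `t = λ - k`. The lower bound on `λ` says exactly `x - 1 < t x`,
i.e. `t / (t + 1) > (x - 1) / (2x - 1)`. Both slopes are positive, and after clearing
denominators `b_m(λ) ≤ a_{m+1}(λ)` becomes `(t + 1)(x - 1)(16x - 1) ≤ t (4x - 1)(8x - 1)`,
which follows from the lower bound because `(2x - 1)(16x - 1) = (4x - 1)(8x - 1) - 6x`.
-/

lemma slope_b_le_slope_a_cross_multiplied {t x : ℝ} (hx : 1 < x) (ht : x - 1 < t * x) :
    (t + 1) * (x - 1) * (16 * x - 1) ≤ t * (4 * x - 1) * (8 * x - 1) := by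
  have ht0 : 0 < t := pos_of_mul_pos_left (b := x) (by linarith) (by linarith)
  calc (t + 1) * (x - 1) * (16 * x - 1) ≤ t * (2 * x - 1) * (16 * x - 1) :=
        mul_le_mul_of_nonneg_right (by linarith) (by linarith)
    _ ≤ t * (4 * x - 1) * (8 * x - 1) := by
        simp only [mul_assoc]
        exact mul_le_mul_of_nonneg_left (by nlinarith) ht0.le

lemma one_div_slope_b_le_one_div_slope_a {p x t : ℝ} (hp : 0 < p) (hx : 1 < x) (ht : x - 1 < t * x) :
    1 / (p * (t / (x - 1) - (t + 1) / (4 * x - 1)))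
      ≤ 1 / (2 * p * (t + 1) * (1 / (4 * x - 1) - 1 / (8 * x - 1))) := by
  have ht0 : 0 < t := pos_of_mul_pos_left (b := x) (by linarith) (by linarith)
  have h1 : 0 < x - 1 := by linarith
  have h4 : 0 < 4 * x - 1 := by linarith
  have h8 : 0 < 8 * x - 1 := by linarith
  have hdiff : 1 / (4 * x - 1) - 1 / (8 * x - 1) = 4 * x / ((4 * x - 1) * (8 * x - 1)) := by
    rw [div_sub_div _ _ h4.ne' h8.ne']; ring
  apply one_div_le_one_div_of_le (by rw [hdiff]; positivity)
  rw [show 2 * p * (t + 1) * (1 / (4 * x - 1) - 1 / (8 * x - 1))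
      = p * (2 * (t + 1) * (1 / (4 * x - 1) - 1 / (8 * x - 1))) by ring]
  refine mul_le_mul_of_nonneg_left ?_ hp.le
  rw [hdiff, div_sub_div _ _ h1.ne' h4.ne', mul_div_assoc', div_le_div_iff₀ (by positivity) (by positivity)]
  nlinarith [mul_le_mul_of_nonneg_right (slope_b_le_slope_a_cross_multiplied hx ht) h4.le]

theorem stmt12_general (k m : ℤ) (hm : k - 1 ≤ m) (lam : ℝ)
    (hlo : (m : ℝ) - ((m - k + 2 : ℤ) : ℝ) + 3 - (2 : ℝ) ^ (-(m - k + 2)) < lam) :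
    1 / ((2 : ℝ) ^ (m + 1) * ((lam - (k : ℝ)) / ((2 : ℝ) ^ (m - k + 2) - 1)
          - (lam - ((k : ℝ) - 1)) / ((2 : ℝ) ^ (m - k + 4) - 1)))
      ≤ 1 / ((2 : ℝ) ^ (m + 2) * (lam - ((k : ℝ) - 1))
          * (1 / ((2 : ℝ) ^ (m - k + 4) - 1) - 1 / ((2 : ℝ) ^ (m - k + 5) - 1))) := by
  have hx : 1 < (2 : ℝ) ^ (m - k + 2) := one_lt_zpow₀ one_lt_two (by omega)
  have ht : (2 : ℝ) ^ (m - k + 2) - 1 < (lam - k) * 2 ^ (m - k + 2) := by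
    rw [zpow_neg] at hlo
    push_cast at hlo
    calc (2 : ℝ) ^ (m - k + 2) - 1 = (1 - ((2 : ℝ) ^ (m - k + 2))⁻¹) * 2 ^ (m - k + 2) := by
          field_simp
      _ < (lam - k) * 2 ^ (m - k + 2) := mul_lt_mul_of_pos_right (by linarith) (by positivity)
  have e4 : (2 : ℝ) ^ (m - k + 4) = 4 * 2 ^ (m - k + 2) := by
    rw [show m - k + 4 = 2 + (m - k + 2) by ring, zpow_add₀ two_ne_zero]; norm_num
  have e5 : (2 : ℝ) ^ (m - k + 5) = 8 * 2 ^ (m - k + 2) := by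
    rw [show m - k + 5 = 3 + (m - k + 2) by ring, zpow_add₀ two_ne_zero]; norm_num
  have e2 : (2 : ℝ) ^ (m + 2) = 2 * 2 ^ (m + 1) := by
    rw [show m + 2 = 1 + (m + 1) by ring, zpow_add₀ two_ne_zero]; norm_num
  rw [e4, e5, e2, show lam - ((k : ℝ) - 1) = lam - k + 1 by ring]
  exact one_div_slope_b_le_one_div_slope_a (by positivity) hx ht

/-- For integers `k ≥ 3`, `m ≥ k−1`, and `λ` in the range
`λ_{m−k+2}^m < λ ≤ λ_{m−k+3}^{m+1}` (where `λ_j^n = n−j+3−2^{−j}`), the slope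
comparison `b_m(λ) ≤ a_{m+1}(λ)` holds, where
`1/a_{m+1}(λ) = 2^{m+2}(λ−(k−1))(1/(2^{m−k+4}−1) − 1/(2^{m−k+5}−1))` and
`1/b_m(λ) = 2^{m+1}((λ−k)/(2^{m−k+2}−1) − (λ−(k−1))/(2^{m−k+4}−1))`. -/
theorem stmt12 (k m : ℤ) (hk : 3 ≤ k) (hm : k - 1 ≤ m) (lam : ℝ)
    (hlo : (m : ℝ) - ((m - k + 2 : ℤ) : ℝ) + 3 - (2 : ℝ) ^ (-(m - k + 2)) < lam)
    (hhi : lam ≤ ((m + 1 : ℤ) : ℝ) - ((m - k + 3 : ℤ) : ℝ) + 3 - (2 : ℝ) ^ (-(m - k + 3))) :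
    1 / ((2 : ℝ) ^ (m + 1) * ((lam - (k : ℝ)) / ((2 : ℝ) ^ (m - k + 2) - 1)
          - (lam - ((k : ℝ) - 1)) / ((2 : ℝ) ^ (m - k + 4) - 1)))
      ≤ 1 / ((2 : ℝ) ^ (m + 2) * (lam - ((k : ℝ) - 1))
          * (1 / ((2 : ℝ) ^ (m - k + 4) - 1) - 1 / ((2 : ℝ) ^ (m - k + 5) - 1))) :=
  stmt12_general k m hm lam hlo
end

section
/- Let f̃ : [0,∞) × ℝ → [0,1] satisfy: f̃(·, λ) is concave for each λ, f̃ is non-increasing in λ, and f̃(x, λ+x) ≥ (1/2) f̃(2x, λ) for all x ≥ 0, λ ∈ ℝ. Then for all 0 < A < 1, x ≥ 0 and λ ∈ ℝ, ((A+1)/2) f̃(2x/(A+1), λ+x) ≥ (A/2) f̃(2x/A, λ). -/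
/-!
Put `y = 2x/(A+1)`, so that `x ≤ y` and `2y = (2A/(A+1)) · (2x/A)` with `2A/(A+1) ≤ 1`.
Concavity together with `f̃(0, λ) ≥ 0` gives `t f̃(z, λ) ≤ f̃(tz, λ)` for `t ∈ [0,1]`, hence
`(A/2) f̃(2x/A, λ) ≤ ((A+1)/4) f̃(2y, λ)`. Since `λ ≤ λ + x - y`, monotonicity and the jump inequality
at `(y, λ + x - y)` give `(1/2) f̃(2y, λ) ≤ f̃(y, λ + x)`.
-/

theorem ConcaveOn.smul_le_apply_smul {𝕜 E β : Type*} [Ring 𝕜] [PartialOrder 𝕜]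
    [IsOrderedRing 𝕜] [AddCommMonoid E] [Module 𝕜 E] [AddCommMonoid β] [PartialOrder β]
    [IsOrderedAddMonoid β] [Module 𝕜 β] [PosSMulMono 𝕜 β] {s : Set E} {f : E → β} {t : 𝕜}
    {x : E} (hf : ConcaveOn 𝕜 s f) (h0 : (0 : E) ∈ s) (hf0 : 0 ≤ f 0) (hx : x ∈ s)
    (ht₀ : 0 ≤ t) (ht₁ : t ≤ 1) : t • f x ≤ f (t • x) := by
  have h := hf.2 h0 hx (sub_nonneg.2 ht₁) ht₀ (sub_add_cancel 1 t)
  rw [smul_zero, zero_add] at h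
  exact le_trans (le_add_of_nonneg_left (smul_nonneg (sub_nonneg.2 ht₁) hf0)) h

/-- If `f̃ : [0,∞)×ℝ → [0,1]` is concave in `x`, non-increasing in `λ`, and satisfies
`f̃(x, λ+x) ≥ (1/2) f̃(2x, λ)`, then for all `0 < A < 1`,
`((A+1)/2) f̃(2x/(A+1), λ+x) ≥ (A/2) f̃(2x/A, λ)`. -/
theorem stmt16 (f : ℝ → ℝ → ℝ)
    (hrange : ∀ x lam, 0 ≤ x → f x lam ∈ Set.Icc (0 : ℝ) 1)
    (hconc : ∀ lam, ConcaveOn ℝ (Set.Ici (0 : ℝ)) (fun x => f x lam))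
    (hmono : ∀ x, 0 ≤ x → ∀ l₁ l₂ : ℝ, l₁ ≤ l₂ → f x l₂ ≤ f x l₁)
    (hjump : ∀ x lam, 0 ≤ x → (1 / 2) * f (2 * x) lam ≤ f x (lam + x)) :
    ∀ A x lam, 0 < A → A < 1 → 0 ≤ x →
      (A / 2) * f (2 * x / A) lam ≤ ((A + 1) / 2) * f (2 * x / (A + 1)) (lam + x) := by
  intro A x lam hA₀ hA₁ hx
  set y := 2 * x / (A + 1) with hy
  have hy₀ : 0 ≤ y := by positivity
  have hxy : x ≤ y := by rw [hy, le_div_iff₀ (by linarith)]; nlinarith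
  have hshift : (1 / 2) * f (2 * y) lam ≤ f y (lam + x) :=
    calc (1 / 2) * f (2 * y) lam ≤ (1 / 2) * f (2 * y) (lam + x - y) := by
          gcongr; exact hmono _ (by positivity) _ _ (by linarith)
      _ ≤ f y (lam + x - y + y) := hjump y _ hy₀
      _ = f y (lam + x) := by rw [sub_add_cancel]
  have hscale : (2 * A / (A + 1)) * f (2 * x / A) lam ≤ f (2 * y) lam := by
    have h := (hconc lam).smul_le_apply_smul (t := 2 * A / (A + 1)) Set.self_mem_Ici
      (hrange 0 lam le_rfl).1 (Set.mem_Ici.2 (by positivity : 0 ≤ 2 * x / A)) (by positivity)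
      (by rw [div_le_one (by linarith)]; linarith)
    have harg : 2 * A / (A + 1) * (2 * x / A) = 2 * y := by rw [hy]; field_simp
    simpa only [smul_eq_mul, harg] using h
  calc (A / 2) * f (2 * x / A) lam
        = (A + 1) / 2 * ((1 / 2) * ((2 * A / (A + 1)) * f (2 * x / A) lam)) := by field_simp
    _ ≤ (A + 1) / 2 * ((1 / 2) * f (2 * y) lam) := by gcongr
    _ ≤ (A + 1) / 2 * f y (lam + x) := by gcongr
end
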